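/- arXiv:1104.3100 — 2 statements merged into one kernel-verified Lean document; each statement's English description precedes it below -/
import Mathlib

section
/- For every real δ > 0 and every positive integer k, the series ∑ over (j_1,...,j_k) ∈ ℕ₊^k of 1 / (j_1 · ... · j_k · (j_1² + ... + j_k²)^δ) converges (is summable). -/
open Finset Real


lemma aux_prod_summable (f : ℕ+ → ℝ) (hf : Summable f) (h0 : ∀ n, 0 ≤ f n) :
    ∀ n : ℕ, Summable (fun j : Fin n → ℕ+ => ∏ i, f (j i)) := by
  intro n
  induction n with
  | zero => exact summable_of_finite_support (Set.toFinite _)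
  | succ n ih =>
    have key : Summable (fun p : ℕ+ × (Fin n → ℕ+) => f p.1 * ∏ i, f (p.2 i)) :=
      Summable.mul_of_nonneg (f := f) (g := fun j : Fin n → ℕ+ => ∏ i, f (j i)) hf ih h0
        (fun g => Finset.prod_nonneg fun i _ => h0 _)
    have := key.comp_injective (Fin.consEquiv (fun _ : Fin (n+1) => ℕ+)).symm.injective
    refine this.congr fun j => ?_
    simp only [Function.comp_apply, Fin.consEquiv_symm_apply, Fin.prod_univ_succ, Fin.tail]

theorem stmt_1 (δ : ℝ) (hδ : 0 < δ) (k : ℕ) (hk : 0 < k) :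
    Summable (fun j : Fin k → ℕ+ =>
      1 / ((∏ i, ((j i : ℕ) : ℝ)) * (∑ i, ((j i : ℕ) : ℝ) ^ 2) ^ δ)) := by
  set c : ℝ := 1 + 2 * δ / k with hc
  have hkpos : (0:ℝ) < k := Nat.cast_pos.mpr hk
  have hc1 : 1 < c := by
    have h : 0 < 2 * δ / k := by positivity
    rw [hc]; linarith
  -- base summable function
  have hnat : Summable (fun n : ℕ => (n : ℝ) ^ (-c)) := by
    rw [Real.summable_nat_rpow]
    linarith
  have hf : Summable (fun n : ℕ+ => ((n : ℕ) : ℝ) ^ (-c)) :=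
    hnat.comp_injective PNat.coe_injective
  have hprod := aux_prod_summable _ hf (fun n => Real.rpow_nonneg (Nat.cast_nonneg _) _) k
  refine Summable.of_nonneg_of_le (fun j => by positivity) (fun j => ?_) hprod
  -- pointwise bound
  have hj1 : ∀ i, (1:ℝ) ≤ ((j i : ℕ) : ℝ) := fun i => by exact_mod_cast (j i).one_le
  have hjpos : ∀ i, (0:ℝ) < ((j i : ℕ) : ℝ) := fun i => lt_of_lt_of_le one_pos (hj1 i)
  set P : ℝ := ∏ i, ((j i : ℕ) : ℝ) with hP
  set S : ℝ := ∑ i, ((j i : ℕ) : ℝ) ^ 2 with hS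
  have hPpos : 0 < P := Finset.prod_pos fun i _ => hjpos i
  have hSpos : 0 < S := Finset.sum_pos (fun i _ => by positivity) ⟨⟨0, hk⟩, Finset.mem_univ _⟩
  -- P^2 ≤ S^k
  have hP2 : P ^ 2 ≤ S ^ k := by
    rw [hP, ← Finset.prod_pow]
    calc ∏ i, ((j i : ℕ) : ℝ) ^ 2 ≤ ∏ _i : Fin k, S :=
          Finset.prod_le_prod (fun i _ => by positivity)
            (fun i _ => Finset.single_le_sum (f := fun i => ((j i : ℕ):ℝ)^2) (fun i _ => by positivity) (Finset.mem_univ i))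
      _ = S ^ k := by simp
  -- P^(2δ/k) ≤ S^δ
  have hrp : P ^ (2 * δ / k) ≤ S ^ δ := by
    have h1 : (P ^ 2) ^ (δ / k) ≤ (S ^ k) ^ (δ / k) :=
      Real.rpow_le_rpow (by positivity) hP2 (by positivity)
    rw [← Real.rpow_natCast P 2, ← Real.rpow_natCast S k,
      ← Real.rpow_mul hPpos.le, ← Real.rpow_mul hSpos.le] at h1
    have e1 : (2:ℕ) * (δ / k) = 2 * δ / k := by push_cast; ring
    have e2 : (k:ℝ) * (δ / k) = δ := by field_simp
    rwa [e1, e2] at h1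
  -- ∏ f = P^(-c)
  have hprodeq : ∏ i, ((j i : ℕ) : ℝ) ^ (-c) = P ^ (-c) := by
    rw [hP, ← Real.finset_prod_rpow _ _ (fun i _ => (hjpos i).le)]
  rw [hprodeq]
  have hden : P ^ c ≤ P * S ^ δ := by
    have : P ^ c = P * P ^ (2 * δ / k) := by
      rw [hc, Real.rpow_add hPpos, Real.rpow_one]
    rw [this]
    exact mul_le_mul_of_nonneg_left hrp hPpos.le
  rw [Real.rpow_neg hPpos.le, one_div]
  exact inv_anti₀ (by positivity) hden
end

section
/- Fix a positive integer k and ε > 0. Then ∑_{j_k ≥ N} ∑_{(j_1,...,j_{k-1}) ∈ ℕ₊^{k-1}} 1/(j_1 · ... · j_k · (j_1² + ... + j_k²)) = O(N^{ε-2}) as N → ∞; i.e., there is a constant C such that for all N ≥ 2 the tail sum is at most C · N^{ε-2}. -/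
/-!
Since `T = x² + ∑ yᵢ²` dominates `x²` and every `yᵢ²`, for weights `a + m b = 1` it dominates
the weighted geometric mean `(x²)ᵃ ∏ (yᵢ²)ᵇ`. Taking `b = δ` small turns the summand into
`x^-(3 - 2mδ) ∏ yᵢ^-(1 + 2δ)`: the sum over the `yᵢ` factors into `ζ(1 + 2δ)ᵐ`, and since
`3 - 2mδ = (1 + δ) + (2 - (2m + 1)δ)`, the tail over `x ≥ N` is at most `ζ(1 + δ) N^((2m + 1)δ - 2)`.
-/

open Finset Real

section

variable {ι : Type*} [Fintype ι]

theorem rpow_mul_prod_rpow_le_sq_add_sum_sq (x : ℝ) (y : ι → ℝ) {a b : ℝ} (ha : 0 ≤ a)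
    (hb : 0 ≤ b) (hab : a + Fintype.card ι * b = 1) :
    (x ^ 2) ^ a * ∏ i, (y i ^ 2) ^ b ≤ x ^ 2 + ∑ i, y i ^ 2 := by
  set T := x ^ 2 + ∑ i, y i ^ 2
  have hx : x ^ 2 ≤ T := le_add_of_nonneg_right (sum_nonneg fun i _ => sq_nonneg (y i))
  have hy (i : ι) : y i ^ 2 ≤ T :=
    le_add_of_nonneg_of_le (sq_nonneg x) (single_le_sum (fun j _ => sq_nonneg (y j)) (mem_univ i))
  have hT : 0 ≤ T := (sq_nonneg x).trans hx
  calc (x ^ 2) ^ a * ∏ i, (y i ^ 2) ^ b ≤ T ^ a * ∏ _i : ι, T ^ b := by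
        gcongr with i
        exact hy i
    _ = T ^ (a + Fintype.card ι * b) := by
        rw [prod_const, card_univ, rpow_add' hT (by rw [hab]; exact one_ne_zero),
          rpow_natCast_mul hT, ← rpow_pow_comm hT]
    _ = T := by rw [hab, rpow_one]

theorem mul_sq_rpow {x : ℝ} (hx : 0 < x) (a : ℝ) : x * (x ^ 2) ^ a = x ^ (1 + 2 * a) := by
  rw [rpow_add hx, rpow_one, rpow_mul hx.le, rpow_two]

theorem one_div_mul_prod_mul_sq_add_sum_sq_le {x : ℝ} {y : ι → ℝ} (hx : 0 < x)
    (hy : ∀ i, 0 < y i) {a b : ℝ} (ha : 0 ≤ a) (hb : 0 ≤ b) (hab : a + Fintype.card ι * b = 1) :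
    1 / (x * (∏ i, y i) * (x ^ 2 + ∑ i, y i ^ 2)) ≤
      x ^ (-(1 + 2 * a)) * ∏ i, y i ^ (-(1 + 2 * b)) := by
  have hRHS : x ^ (-(1 + 2 * a)) * ∏ i, y i ^ (-(1 + 2 * b)) =
      1 / (x * (∏ i, y i) * ((x ^ 2) ^ a * ∏ i, (y i ^ 2) ^ b)) := by
    simp_rw [rpow_neg hx.le, rpow_neg (hy _).le, ← mul_sq_rpow hx, ← mul_sq_rpow (hy _),
      prod_inv_distrib, prod_mul_distrib]
    ring
  rw [hRHS]
  have hxy : 0 < x * ∏ i, y i := mul_pos hx (prod_pos fun i _ => hy i)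
  gcongr
  · exact mul_pos hxy (mul_pos (by positivity)
      (prod_pos fun i _ => rpow_pos_of_pos (pow_pos (hy i) 2) _))
  · exact rpow_mul_prod_rpow_le_sq_add_sum_sq x y ha hb hab

end

theorem hasSum_fin_pi_prod {β : Type*} {g : β → ℝ} {s : ℝ} (hg : HasSum g s) (hg0 : 0 ≤ g)
    (m : ℕ) : HasSum (fun j : Fin m → β => ∏ i, g (j i)) (s ^ m) := by
  induction m with
  | zero => simp
  | succ m ih =>
    set G := fun j : Fin m → β => ∏ i, g (j i)
    have hprod : HasSum (fun p : β × (Fin m → β) => g p.1 * G p.2) (s * s ^ m) :=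
      hg.mul ih (hg.summable.mul_of_nonneg ih.summable hg0 fun j => prod_nonneg fun i _ => hg0 (j i))
    rw [pow_succ', ← (Fin.consEquiv fun _ => β).hasSum_iff]
    exact hprod.congr_fun fun p => Fin.prod_univ_succ _

theorem tsum_le_tsum_of_nonneg_of_le {ι : Type*} {f g : ι → ℝ} (hf : 0 ≤ f) (hfg : f ≤ g)
    (hg : Summable g) : ∑' i, f i ≤ ∑' i, g i :=
  (hg.of_nonneg_of_le hf hfg).tsum_le_tsum hfg hg

theorem tsum_nat_ge_rpow_neg_add_le {s t : ℝ} (hs : 1 < s) (ht : 0 ≤ t) {N : ℕ} (hN : 0 < N) :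
    ∑' n : {n : ℕ // N ≤ n}, ((n : ℕ) : ℝ) ^ (-(s + t)) ≤
      (∑' n : ℕ, (n : ℝ) ^ (-s)) * (N : ℝ) ^ (-t) := by
  have hsum : Summable fun n : ℕ => (n : ℝ) ^ (-s) := summable_nat_rpow.2 (by linarith)
  have hterm (n : {n : ℕ // N ≤ n}) :
      ((n : ℕ) : ℝ) ^ (-(s + t)) ≤ ((n : ℕ) : ℝ) ^ (-s) * (N : ℝ) ^ (-t) := by
    have hn : (0 : ℝ) < (n : ℕ) := by exact_mod_cast hN.trans_le n.2
    rw [neg_add, rpow_add hn]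
    exact mul_le_mul_of_nonneg_left
      (rpow_le_rpow_of_nonpos (by exact_mod_cast hN) (Nat.cast_le.2 n.2) (neg_nonpos.2 ht))
      (rpow_nonneg hn.le _)
  calc ∑' n : {n : ℕ // N ≤ n}, ((n : ℕ) : ℝ) ^ (-(s + t))
      ≤ ∑' n : {n : ℕ // N ≤ n}, ((n : ℕ) : ℝ) ^ (-s) * (N : ℝ) ^ (-t) :=
        tsum_le_tsum_of_nonneg_of_le (fun n => rpow_nonneg (Nat.cast_nonneg _) _) hterm
          ((hsum.subtype _).mul_right _)
    _ = (∑' n : {n : ℕ // N ≤ n}, ((n : ℕ) : ℝ) ^ (-s)) * (N : ℝ) ^ (-t) := tsum_mul_right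
    _ ≤ (∑' n : ℕ, (n : ℝ) ^ (-s)) * (N : ℝ) ^ (-t) := by
        gcongr
        exact hsum.tsum_subtype_le _ {n | N ≤ n} (fun n => rpow_nonneg (Nat.cast_nonneg _) _)

theorem tsum_pi_pnat_one_div_le (m : ℕ) {δ x : ℝ} (hδ : 0 < δ) (hmδ : m * δ ≤ 1) (hx : 0 < x) :
    ∑' j : Fin m → ℕ+, 1 / (x * (∏ i, ((j i : ℕ) : ℝ)) * (x ^ 2 + ∑ i, ((j i : ℕ) : ℝ) ^ 2)) ≤
      x ^ (-(1 + 2 * (1 - m * δ))) * (∑' n : ℕ+, ((n : ℕ) : ℝ) ^ (-(1 + 2 * δ))) ^ m := by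
  have hZ : HasSum (fun j : Fin m → ℕ+ => ∏ i, ((j i : ℕ) : ℝ) ^ (-(1 + 2 * δ)))
      ((∑' n : ℕ+, ((n : ℕ) : ℝ) ^ (-(1 + 2 * δ))) ^ m) :=
    hasSum_fin_pi_prod
      ((summable_nat_rpow.2 (by linarith)).comp_injective PNat.coe_injective).hasSum
      (fun n => rpow_nonneg (Nat.cast_nonneg _) _) m
  rw [← hZ.tsum_eq, ← tsum_mul_left]
  exact tsum_le_tsum_of_nonneg_of_le (fun j => by positivity)
    (fun j => one_div_mul_prod_mul_sq_add_sum_sq_le hx (fun i => by positivity) (by linarith)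
      hδ.le (by simp))
    (hZ.summable.mul_left _)

theorem tsum_nat_ge_tsum_pi_pnat_one_div_le (m : ℕ) {δ : ℝ} (hδ : 0 < δ)
    (hmδ : (2 * m + 1) * δ ≤ 2) {N : ℕ} (hN : 0 < N) :
    ∑' (x : {n : ℕ // N ≤ n}) (j : Fin m → ℕ+),
        1 / (((x : ℕ) : ℝ) * (∏ i, ((j i : ℕ) : ℝ)) *
          (((x : ℕ) : ℝ) ^ 2 + ∑ i, ((j i : ℕ) : ℝ) ^ 2)) ≤
      (∑' n : ℕ, (n : ℝ) ^ (-(1 + δ))) * (∑' n : ℕ+, ((n : ℕ) : ℝ) ^ (-(1 + 2 * δ))) ^ m *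
        (N : ℝ) ^ ((2 * m + 1) * δ - 2) := by
  set Z := ∑' n : ℕ+, ((n : ℕ) : ℝ) ^ (-(1 + 2 * δ))
  set t := 2 - (2 * m + 1) * δ
  have hexp : 1 + 2 * (1 - m * δ) = (1 + δ) + t := by ring
  have hinner (x : {n : ℕ // N ≤ n}) :
      ∑' j : Fin m → ℕ+, 1 / (((x : ℕ) : ℝ) * (∏ i, ((j i : ℕ) : ℝ)) *
          (((x : ℕ) : ℝ) ^ 2 + ∑ i, ((j i : ℕ) : ℝ) ^ 2)) ≤
        ((x : ℕ) : ℝ) ^ (-((1 + δ) + t)) * Z ^ m := by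
    rw [← hexp]
    exact tsum_pi_pnat_one_div_le m hδ (by nlinarith)
      (by exact_mod_cast hN.trans_le x.2)
  calc _ ≤ ∑' x : {n : ℕ // N ≤ n}, ((x : ℕ) : ℝ) ^ (-((1 + δ) + t)) * Z ^ m :=
        tsum_le_tsum_of_nonneg_of_le (fun x => tsum_nonneg fun j => by positivity) hinner
          (((summable_nat_rpow.2 (by linarith)).subtype _).mul_right _)
    _ = (∑' x : {n : ℕ // N ≤ n}, ((x : ℕ) : ℝ) ^ (-((1 + δ) + t))) * Z ^ m := tsum_mul_right
    _ ≤ (∑' n : ℕ, (n : ℝ) ^ (-(1 + δ))) * (N : ℝ) ^ (-t) * Z ^ m := by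
        gcongr
        exact tsum_nat_ge_rpow_neg_add_le (by linarith) (by linarith) hN
    _ = _ := by rw [mul_right_comm, neg_sub]

theorem stmt_2_general (k : ℕ) (ε : ℝ) (hε : 0 < ε) :
    ∃ C : ℝ, ∀ N : ℕ, 2 ≤ N →
      (∑' (jk : {n : ℕ // N ≤ n}) (j : Fin (k - 1) → ℕ+),
        1 / (((jk : ℕ) : ℝ) * (∏ i, ((j i : ℕ) : ℝ)) *
          (((jk : ℕ) : ℝ) ^ 2 + ∑ i, ((j i : ℕ) : ℝ) ^ 2))) ≤
      C * (N : ℝ) ^ (ε - 2) := by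
  set m := k - 1
  obtain ⟨δ, hδ, hδε⟩ : ∃ δ : ℝ, 0 < δ ∧ (2 * m + 1) * δ = min ε 2 :=
    ⟨min ε 2 / (2 * m + 1), by positivity, mul_div_cancel₀ _ (by positivity)⟩
  refine ⟨(∑' n : ℕ, (n : ℝ) ^ (-(1 + δ))) * (∑' n : ℕ+, ((n : ℕ) : ℝ) ^ (-(1 + 2 * δ))) ^ m,
    fun N hN => (tsum_nat_ge_tsum_pi_pnat_one_div_le m hδ (hδε.trans_le (min_le_right _ _))
      (by omega)).trans ?_⟩
  gcongr
  · exact_mod_cast (by omega : 1 ≤ N)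
  · linarith [min_le_left ε 2]

theorem stmt_2 (k : ℕ) (hk : 0 < k) (ε : ℝ) (hε : 0 < ε) :
    ∃ C : ℝ, ∀ N : ℕ, 2 ≤ N →
      (∑' (jk : {n : ℕ // N ≤ n}) (j : Fin (k - 1) → ℕ+),
        1 / (((jk : ℕ) : ℝ) * (∏ i, ((j i : ℕ) : ℝ)) *
          (((jk : ℕ) : ℝ) ^ 2 + ∑ i, ((j i : ℕ) : ℝ) ^ 2))) ≤
      C * (N : ℝ) ^ (ε - 2) :=
  stmt_2_general k ε hε
end
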